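/- arXiv:1712.08404 — 4 statements merged into one kernel-verified Lean document; each statement's English description precedes it below -/
import Mathlib

section
/- In the weighted set cover problem, the greedy algorithm that repeatedly selects the set minimizing cost per newly covered element produces a cover whose cost is at most (1 + log N) times the optimal cost, where N is the size of the universe. -/
/-!
Charge the weight of each greedy step to the elements it newly covers, at the price
`w(a) / |a \ C|` per element. Against any cover `T`, those elements are spread over the sets
`S ∈ T`, and by greediness the price is at most `w(S) / |S \ C|`. So the charge landing on `S`
is at most `w(S) · (H_r - H_m)`, where `r` and `m` count the uncovered elements of `S` before
and after the step and `H` is the harmonic number. Over the whole run this telescopes to at most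
`w(S) · H_|S| ≤ w(S) · H_N ≤ w(S) (1 + log N)`.
-/

def coveredBy {α : Type*} [DecidableEq α] (L : List (Finset α)) (k : ℕ) :
    Finset α :=
  (L.take k).foldr (· ∪ ·) ∅

open Finset

theorem harmonic_monotone : Monotone harmonic :=
  monotone_nat_of_le_succ fun n => by
    rw [harmonic_succ, le_add_iff_nonneg_right]
    positivity

theorem div_le_harmonic_sub_harmonic {m r : ℕ} (h : m ≤ r) :
    ((r : ℝ) - m) / r ≤ (harmonic r : ℝ) - harmonic m := by
  have hdiff : (harmonic r : ℝ) - harmonic m = ∑ i ∈ Ico m r, ((i + 1 : ℕ) : ℝ)⁻¹ := by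
    simp only [harmonic, Rat.cast_sum, Rat.cast_inv, Rat.cast_natCast]
    exact (sum_Ico_eq_sub _ h).symm
  rw [hdiff, div_eq_mul_inv, ← Nat.cast_sub h, ← Nat.card_Ico, ← nsmul_eq_mul, ← sum_const]
  refine sum_le_sum fun i hi => inv_anti₀ (by positivity) ?_
  exact_mod_cast (mem_Ico.mp hi).2

theorem mul_sub_le_mul_harmonic_sub {p c : ℝ} {m r : ℕ} (hmr : m ≤ r) (hc : 0 ≤ c)
    (hp : 0 < r → p ≤ c / r) : p * ((r : ℝ) - m) ≤ c * (harmonic r - harmonic m) := by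
  rcases r.eq_zero_or_pos with rfl | hr
  · obtain rfl : m = 0 := Nat.le_zero.mp hmr
    simp
  have hH := div_le_harmonic_sub_harmonic hmr
  have hrm : (0 : ℝ) ≤ r - m := sub_nonneg.mpr (by exact_mod_cast hmr)
  calc p * ((r : ℝ) - m) ≤ c / r * (r - m) := mul_le_mul_of_nonneg_right (hp hr) hrm
    _ = c * ((r - m) / r) := by ring
    _ ≤ c * (harmonic r - harmonic m) := mul_le_mul_of_nonneg_left hH hc

section Cover

variable {α : Type*} [DecidableEq α]

theorem card_le_sum_card_inter {A : Finset α} {T : Finset (Finset α)}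
    (h : A ⊆ T.biUnion id) : #A ≤ ∑ S ∈ T, #(A ∩ S) := by
  calc #A = #(A ∩ T.biUnion id) := by rw [inter_eq_left.mpr h]
    _ = #(T.biUnion fun S => A ∩ S) := by rw [inter_biUnion]; rfl
    _ ≤ ∑ S ∈ T, #(A ∩ S) := card_biUnion_le

theorem card_sdiff_union_add_card_inter (S a C : Finset α) :
    #(S \ (a ∪ C)) + #((a \ C) ∩ S) = #(S \ C) := by
  rw [← card_union_of_disjoint]
  · congr 1
    ext x
    simp only [mem_union, mem_sdiff, mem_inter]
    tauto
  · rw [disjoint_left]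
    simp only [mem_sdiff, mem_union, mem_inter]
    tauto

theorem weight_le_sum_harmonic_drop {a C : Finset α} {T : Finset (Finset α)}
    {w : Finset α → ℝ} (hw : ∀ S ∈ T, 0 ≤ w S) (hwa : 0 ≤ w a) (hnew : (a \ C).Nonempty)
    (hcov : a \ C ⊆ T.biUnion id)
    (hgreedy : ∀ S ∈ T, (S \ C).Nonempty → w a / #(a \ C) ≤ w S / #(S \ C)) :
    w a ≤ ∑ S ∈ T, w S * (harmonic #(S \ C) - harmonic #(S \ (a ∪ C))) := by
  set p := w a / #(a \ C)
  have hA : (0 : ℝ) < #(a \ C) := by exact_mod_cast hnew.card_pos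
  calc w a = p * #(a \ C) := (div_mul_cancel₀ _ hA.ne').symm
    _ ≤ p * ∑ S ∈ T, (#((a \ C) ∩ S) : ℝ) := by
        gcongr
        exact_mod_cast card_le_sum_card_inter hcov
    _ = ∑ S ∈ T, p * #((a \ C) ∩ S) := mul_sum _ _ _
    _ ≤ _ := sum_le_sum fun S hS => by
        have hsplit := card_sdiff_union_add_card_inter S a C
        rw [show (#((a \ C) ∩ S) : ℝ) = #(S \ C) - #(S \ (a ∪ C)) by
          rw [← hsplit]; push_cast; ring]
        exact mul_sub_le_mul_harmonic_sub (by omega) (hw S hS)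
          fun h => hgreedy S hS (card_pos.mp h)

theorem sum_range_harmonic_drop_le (S : Finset α) (C : ℕ → Finset α) (hC : C 0 = ∅) (n : ℕ) :
    ∑ k ∈ range n, ((harmonic #(S \ C k) : ℝ) - harmonic #(S \ C (k + 1)))
      ≤ harmonic #S := by
  rw [sum_range_sub' (fun k => (harmonic #(S \ C k) : ℝ)), hC, sdiff_empty, sub_le_self_iff]
  exact_mod_cast harmonic_monotone (Nat.zero_le _)

theorem mem_foldr_union {l : List (Finset α)} {x : α} :
    x ∈ l.foldr (· ∪ ·) ∅ ↔ ∃ S ∈ l, x ∈ S := by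
  induction l with
  | nil => simp
  | cons a t ih => simp [ih]

theorem coveredBy_succ (L : List (Finset α)) {k : ℕ}
    (hk : k < L.length) : coveredBy L (k + 1) = L[k] ∪ coveredBy L k := by
  ext x
  rw [coveredBy, coveredBy, mem_union, mem_foldr_union, mem_foldr_union, List.take_add_one,
    List.getElem?_eq_getElem hk]
  simp only [List.mem_append, Option.toList_some, List.mem_singleton, or_and_right, exists_or,
    exists_eq_left, or_comm]

end Cover

theorem stmt_1_general {α : Type*} [DecidableEq α]
    (U : Finset α) (P : Finset (Finset α)) (w : Finset α → ℝ)
    (hw : ∀ S ∈ P, 0 ≤ w S)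
    (hP : P.biUnion id = U)
    (L : List (Finset α))
    (hmem : ∀ S ∈ L, S ∈ P)
    (hnew : ∀ k : ℕ, (hk : k < L.length) →
      (L.get ⟨k, hk⟩ \ coveredBy L k).Nonempty)
    (hgreedy : ∀ k : ℕ, (hk : k < L.length) → ∀ S ∈ P,
      (S \ coveredBy L k).Nonempty →
        w (L.get ⟨k, hk⟩) / ((L.get ⟨k, hk⟩ \ coveredBy L k).card : ℝ)
          ≤ w S / ((S \ coveredBy L k).card : ℝ)) :
    ∀ T ⊆ P, U ⊆ T.biUnion id →
      (L.map w).sum ≤ (1 + Real.log U.card) * ∑ S ∈ T, w S := by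
  intro T hTP hTcov
  have hU : ∀ S ∈ P, S ⊆ U := fun S hS => hP ▸ subset_biUnion_of_mem id hS
  set drop := fun k => ∑ S ∈ T, w S *
    ((harmonic #(S \ coveredBy L k) : ℝ) - harmonic #(S \ coveredBy L (k + 1)))
  have hstep : ∀ k (hk : k < L.length), w L[k] ≤ drop k := fun k hk => by
    have haP := hmem _ (L.getElem_mem hk)
    simp only [drop, coveredBy_succ L hk]
    exact weight_le_sum_harmonic_drop (fun S hS => hw S (hTP hS)) (hw _ haP) (hnew k hk)
      ((sdiff_subset.trans (hU _ haP)).trans hTcov) fun S hS => hgreedy k hk S (hTP hS)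
  calc (L.map w).sum = ∑ k : Fin L.length, w L[k] := (Fin.sum_univ_fun_getElem L w).symm
    _ ≤ ∑ k : Fin L.length, drop k := sum_le_sum fun k _ => hstep k k.2
    _ = ∑ S ∈ T, w S * ∑ k ∈ range L.length,
          ((harmonic #(S \ coveredBy L k) : ℝ) - harmonic #(S \ coveredBy L (k + 1))) := by
        rw [Fin.sum_univ_eq_sum_range drop, sum_comm]
        simp only [mul_sum]
    _ ≤ ∑ S ∈ T, w S * (1 + Real.log #U) := by
        refine sum_le_sum fun S hS => mul_le_mul_of_nonneg_left ?_ (hw S (hTP hS))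
        calc _ ≤ (harmonic #S : ℝ) := sum_range_harmonic_drop_le S _ rfl _
          _ ≤ harmonic #U := by exact_mod_cast harmonic_monotone (card_le_card (hU S (hTP hS)))
          _ ≤ 1 + Real.log #U := harmonic_le_one_add_log _
    _ = (1 + Real.log #U) * ∑ S ∈ T, w S := by rw [← sum_mul, mul_comm]

/-- In the weighted set cover problem with universe `U` of `N`
elements, family `P` of subsets covering `U` and nonnegative weights `w`, the
greedy algorithm that repeatedly selects a set minimizing cost per newly
covered element produces a cover whose cost is at most `(1 + log N)` times
the cost of any cover, in particular of an optimal cover.  The greedy run is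
recorded as a list `L` of chosen sets. -/
theorem stmt_1 {α : Type*} [DecidableEq α]
    (U : Finset α) (P : Finset (Finset α)) (w : Finset α → ℝ)
    (hw : ∀ S ∈ P, 0 ≤ w S)
    (hP : P.biUnion id = U)
    (L : List (Finset α))
    (hmem : ∀ S ∈ L, S ∈ P)
    (hnew : ∀ k : ℕ, (hk : k < L.length) →
      (L.get ⟨k, hk⟩ \ coveredBy L k).Nonempty)
    (hgreedy : ∀ k : ℕ, (hk : k < L.length) → ∀ S ∈ P,
      (S \ coveredBy L k).Nonempty →
        w (L.get ⟨k, hk⟩) / ((L.get ⟨k, hk⟩ \ coveredBy L k).card : ℝ)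
          ≤ w S / ((S \ coveredBy L k).card : ℝ))
    (hdone : U ⊆ coveredBy L L.length) :
    ∀ T ⊆ P, U ⊆ T.biUnion id →
      (L.map w).sum ≤ (1 + Real.log U.card) * ∑ S ∈ T, w S :=
  stmt_1_general U P w hw hP L hmem hnew hgreedy
end

section
/- Consider the optimal cycle selection problem: given a digraph D_R = (N ∪ V_U ∪ V_Y, E_N ∪ E'_U ∪ E'_Y ∪ E_min) with nonnegative costs on edges of E_min, find a minimum-cost subset Ê ⊆ E_min such that every node in N lies in at least one directed cycle of the digraph restricted to E_N ∪ E'_U ∪ E'_Y ∪ Ê. If E' is an ε-optimal solution to this cycle selection problem (c(E') ≤ ε·c(E_opt) for ε ≥ 1), then the corresponding feedback matrix K' with K'_{ij} = ⋆ iff (y_j,u_i) ∈ E' is an ε-optimal solution to the optimal feedback selection problem, i.e., P(K') ≤ ε·P(K*). -/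
section
variable {X : Type*} {m p : ℕ}

/-- Mutual reachability under the relation `R`. -/
def mreach {V : Type*} (R : V → V → Prop) (a b : V) : Prop :=
  Relation.ReflTransGen R a b ∧ Relation.ReflTransGen R b a

/-- Edge relation of the closed-loop digraph `D(Ā,B̄,C̄,K̄)` with dedicated
inputs and outputs and feedback edges `K` (pairs `(output, input)`). -/
def clEdge (EX : X → X → Prop) (fU : Fin m → X) (fY : Fin p → X)
    (K : Finset (Fin p × Fin m)) :
    (X ⊕ Fin m ⊕ Fin p) → (X ⊕ Fin m ⊕ Fin p) → Prop
  | Sum.inl a, Sum.inl b => EX a b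
  | Sum.inr (Sum.inl i), Sum.inl b => fU i = b
  | Sum.inl a, Sum.inr (Sum.inr j) => fY j = a
  | Sum.inr (Sum.inr j), Sum.inr (Sum.inl i) => (j, i) ∈ K
  | _, _ => False

/-- Equivalence identifying vertices of the same SCC of the state digraph. -/
def veq (EX : X → X → Prop) (v w : X ⊕ Fin m ⊕ Fin p) : Prop :=
  (∃ a b : X, v = Sum.inl a ∧ w = Sum.inl b ∧ mreach EX a b) ∨ v = w

/-- Edge relation of the condensed digraph. -/
def cedge (EX : X → X → Prop) (fU : Fin m → X) (fY : Fin p → X)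
    (K : Finset (Fin p × Fin m)) (v w : X ⊕ Fin m ⊕ Fin p) : Prop :=
  ¬ veq EX v w ∧ ∃ v' w', veq EX v v' ∧ veq EX w w' ∧ clEdge EX fU fY K v' w'

/-- The condensed node of the state `x` lies on a directed cycle of the
condensed digraph augmented with `K`. -/
def classOnCycle (EX : X → X → Prop) (fU : Fin m → X) (fY : Fin p → X)
    (K : Finset (Fin p × Fin m)) (x : X) : Prop :=
  ∃ v, cedge EX fU fY K (Sum.inl x) v ∧
    Relation.ReflTransGen (cedge EX fU fY K) v (Sum.inl x)

/-- The state `x` lies in an SCC of the closed-loop digraph containing a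
feedback edge of `K`. -/
def coveredState (EX : X → X → Prop) (fU : Fin m → X) (fY : Fin p → X)
    (K : Finset (Fin p × Fin m)) (x : X) : Prop :=
  ∃ e ∈ K, mreach (clEdge EX fU fY K) (Sum.inl x) (Sum.inr (Sum.inr e.1)) ∧
    mreach (clEdge EX fU fY K) (Sum.inl x) (Sum.inr (Sum.inl e.2))

/-- Cost of a set of feedback edges under the feedback cost matrix `P`
(`P i j` is the cost of feeding output `j` to input `i`). -/
def fcost (P : Fin m → Fin p → ℝ) (K : Finset (Fin p × Fin m)) : ℝ :=
  ∑ e ∈ K, P e.2 e.1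

end

/-!
Replace every feedback edge of an optimal feedback matrix `K*` by the cheapest edge of `E_min`
joining the same pair of SCCs. The resulting set `E₁ ⊆ E_min` costs at most `P(K*)`, and it is
feasible for the cycle selection problem: a closed-loop path under `K*` projects onto a path of
the condensed digraph under `E₁`, so the cycle through a state and a feedback edge of `K*`
projects onto a cycle through the condensed node of that state. Hence
`c(E') ≤ ε c(E_opt) ≤ ε c(E₁) ≤ ε P(K*)`.
-/

open Relation

section Reachability

variable {V : Type*} {R : V → V → Prop} {a b c : V}

lemma mreach_refl (a : V) : mreach R a a := ⟨.refl, .refl⟩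

lemma mreach_symm (h : mreach R a b) : mreach R b a := ⟨h.2, h.1⟩

lemma mreach_trans (h : mreach R a b) (h' : mreach R b c) : mreach R a c :=
  ⟨h.1.trans h'.1, h'.2.trans h.2⟩

end Reachability

section Condensation

variable {X : Type*} {m p : ℕ} {EX : X → X → Prop} {fU : Fin m → X} {fY : Fin p → X}
  {K E : Finset (Fin p × Fin m)} {u v w w' : X ⊕ Fin m ⊕ Fin p}

lemma veq_refl (v : X ⊕ Fin m ⊕ Fin p) : veq EX v v := Or.inr rfl

lemma veq_inl_inl_iff {a b : X} :
    veq (m := m) (p := p) EX (.inl a) (.inl b) ↔ mreach EX a b := by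
  constructor
  · rintro (⟨a', b', ha, hb, h⟩ | h)
    · cases ha; cases hb; exact h
    · cases h; exact mreach_refl a
  · exact fun h => Or.inl ⟨a, b, rfl, rfl, h⟩

lemma veq_symm (h : veq EX v w) : veq EX w v := by
  rcases h with ⟨a, b, rfl, rfl, h⟩ | rfl
  exacts [veq_inl_inl_iff.2 (mreach_symm h), veq_refl _]

lemma veq_trans (h : veq EX u v) (h' : veq EX v w) : veq EX u w := by
  rcases h with ⟨a, b, rfl, rfl, h⟩ | rfl
  · rcases h' with ⟨b', c, hb, rfl, h'⟩ | rfl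
    · cases hb; exact veq_inl_inl_iff.2 (mreach_trans h h')
    · exact veq_inl_inl_iff.2 h
  · exact h'

lemma cedge_congr_left (hv : veq EX v w) (h : cedge EX fU fY K v u) : cedge EX fU fY K w u := by
  obtain ⟨hne, v', u', hv', hu', he⟩ := h
  exact ⟨fun hc => hne (veq_trans hv hc), v', u', veq_trans (veq_symm hv) hv', hu', he⟩

lemma cedge_congr_right (h : cedge EX fU fY K u w) (hw : veq EX w w') :
    cedge EX fU fY K u w' := by
  obtain ⟨hne, u', w₀, hu', hw₀, he⟩ := h
  exact ⟨fun hc => hne (veq_trans hc (veq_symm hw)), u', w₀, hu',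
    veq_trans (veq_symm hw) hw₀, he⟩

lemma transGen_cedge_congr_right (h : TransGen (cedge EX fU fY K) u w) (hw : veq EX w w') :
    TransGen (cedge EX fU fY K) u w' := by
  cases h with
  | single h => exact .single (cedge_congr_right h hw)
  | tail h₁ h₂ => exact h₁.tail (cedge_congr_right h₂ hw)

lemma classOnCycle_iff_transGen {x : X} :
    classOnCycle EX fU fY K x ↔ TransGen (cedge EX fU fY K) (.inl x) (.inl x) :=
  TransGen.head'_iff.symm

lemma cedge_inl_inl {a b : X} (hab : EX a b) (hba : ¬ mreach EX a b) :
    cedge EX fU fY K (.inl a) (.inl b) :=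
  ⟨fun h => hba (veq_inl_inl_iff.1 h), _, _, veq_refl _, veq_refl _, hab⟩

lemma transGen_cedge_of_mem {e : Fin p × Fin m} (he : e ∈ K) {b : X}
    (hb : mreach EX (fY e.1) b) : TransGen (cedge EX fU fY K) (.inl b) (.inl (fU e.2)) := by
  have hout : cedge EX fU fY K (.inl b) (.inr (.inr e.1)) :=
    ⟨by simp [veq], _, _, veq_inl_inl_iff.2 (mreach_symm hb), veq_refl _, rfl⟩
  have hfb : cedge EX fU fY K (.inr (.inr e.1)) (.inr (.inl e.2)) :=
    ⟨by simp [veq], _, _, veq_refl _, veq_refl _, he⟩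
  have hin : cedge EX fU fY K (.inr (.inl e.2)) (.inl (fU e.2)) :=
    ⟨by simp [veq], _, _, veq_refl _, veq_refl _, rfl⟩
  exact ((TransGen.single hout).tail hfb).tail hin

end Condensation

section Projection

variable {X : Type*} {m p : ℕ} {EX : X → X → Prop} {fU : Fin m → X} {fY : Fin p → X}
  {K E : Finset (Fin p × Fin m)}

def stateOf (fU : Fin m → X) (fY : Fin p → X) : X ⊕ Fin m ⊕ Fin p → X
  | .inl a => a
  | .inr (.inl i) => fU i
  | .inr (.inr j) => fY j

def SccRepresents (EX : X → X → Prop) (fU : Fin m → X) (fY : Fin p → X)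
    (E K : Finset (Fin p × Fin m)) : Prop :=
  ∀ e ∈ K, ∃ e' ∈ E, mreach EX (fY e.1) (fY e'.1) ∧ mreach EX (fU e.2) (fU e'.2)

lemma SccRepresents.exists_reflTransGen_cedge (hKE : SccRepresents EX fU fY E K)
    {z₁ z₂ : X ⊕ Fin m ⊕ Fin p} (h : ReflTransGen (clEdge EX fU fY K) z₁ z₂)
    {b₁ : X} (hb₁ : mreach EX (stateOf fU fY z₁) b₁) :
    ∃ b₂, mreach EX (stateOf fU fY z₂) b₂ ∧
      ReflTransGen (cedge EX fU fY E) (.inl b₁) (.inl b₂) := by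
  induction h with
  | refl => exact ⟨b₁, hb₁, .refl⟩
  | @tail y z _ hstep ih =>
    obtain ⟨b₂, hb₂, hpath⟩ := ih
    rcases y with a | i | j <;> rcases z with b | i' | j' <;> simp only [clEdge] at hstep <;>
      simp only [stateOf] at hb₂ ⊢
    case inl.inl =>
      by_cases hab : mreach EX a b
      · exact ⟨b₂, mreach_trans (mreach_symm hab) hb₂, hpath⟩
      · exact ⟨b, mreach_refl b,
          hpath.tail (cedge_congr_left (veq_inl_inl_iff.2 hb₂) (cedge_inl_inl hstep hab))⟩
    case inl.inr.inr => exact ⟨b₂, hstep ▸ hb₂, hpath⟩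
    case inr.inl.inl => exact ⟨b₂, hstep ▸ hb₂, hpath⟩
    case inr.inr.inr.inl =>
      obtain ⟨e', he', hY, hU⟩ := hKE _ hstep
      exact ⟨fU e'.2, hU, hpath.trans
        (transGen_cedge_of_mem he' (mreach_trans (mreach_symm hY) hb₂)).to_reflTransGen⟩

lemma SccRepresents.classOnCycle (hKE : SccRepresents EX fU fY E K) {x : X}
    (hx : coveredState EX fU fY K x) : classOnCycle EX fU fY E x := by
  obtain ⟨e, he, hY, hU⟩ := hx
  obtain ⟨e', he', hYe, hUe⟩ := hKE e he
  obtain ⟨b₂, hb₂, hto⟩ := hKE.exists_reflTransGen_cedge hY.1 (mreach_refl x)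
  obtain ⟨b₃, hb₃, hfrom⟩ := hKE.exists_reflTransGen_cedge hU.2 hUe
  have hfeedback : TransGen (cedge EX fU fY E) (.inl b₂) (.inl (fU e'.2)) :=
    transGen_cedge_of_mem he' (mreach_trans (mreach_symm hYe) hb₂)
  rw [classOnCycle_iff_transGen]
  exact transGen_cedge_congr_right (TransGen.trans_right hto (hfeedback.trans_left hfrom))
    (veq_inl_inl_iff.2 (mreach_symm hb₃))

end Projection

lemma fcost_image_le {m p : ℕ} {P : Fin m → Fin p → ℝ} (hP : ∀ i j, 0 ≤ P i j)
    (K : Finset (Fin p × Fin m)) {f : Fin p × Fin m → Fin p × Fin m}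
    (hf : ∀ e ∈ K, P (f e).2 (f e).1 ≤ P e.2 e.1) :
    fcost P (K.image f) ≤ fcost P K :=
  (Finset.sum_image_le_of_nonneg fun _ _ => hP _ _).trans (Finset.sum_le_sum hf)

theorem stmt_4_general {X : Type*} {m p : ℕ}
    (EX : X → X → Prop) (fU : Fin m → X) (fY : Fin p → X)
    (P : Fin m → Fin p → ℝ) (hP : ∀ i j, 0 ≤ P i j)
    (Emin : Finset (Fin p × Fin m))
    -- `Emin` keeps a minimum-cost feedback edge between each pair of SCCs
    (hEmin : ∀ j : Fin p, ∀ i : Fin m, ∃ e ∈ Emin,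
      P e.2 e.1 ≤ P i j ∧ mreach EX (fY j) (fY e.1) ∧ mreach EX (fU i) (fU e.2))
    -- an optimal solution of the cycle selection problem
    (Eopt : Finset (Fin p × Fin m))
    (hEopt_opt : ∀ E₁ ⊆ Emin, (∀ x : X, classOnCycle EX fU fY E₁ x) →
      fcost P Eopt ≤ fcost P E₁)
    -- an optimal solution of the feedback selection problem
    (Kstar : Finset (Fin p × Fin m))
    (hK_feas : ∀ x : X, coveredState EX fU fY Kstar x)
    -- an ε-optimal solution of the cycle selection problem
    (ε : ℝ) (hε : 1 ≤ ε)
    (E' : Finset (Fin p × Fin m))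
    (hE'_eps : fcost P E' ≤ ε * fcost P Eopt) :
    fcost P E' ≤ ε * fcost P Kstar := by
  classical
  choose f hf_mem hf_cost hfY hfU using fun e : Fin p × Fin m => hEmin e.1 e.2
  have hrep : SccRepresents EX fU fY (Kstar.image f) Kstar :=
    fun e he => ⟨f e, Finset.mem_image_of_mem f he, hfY e, hfU e⟩
  have hopt : fcost P Eopt ≤ fcost P Kstar :=
    calc fcost P Eopt ≤ fcost P (Kstar.image f) :=
          hEopt_opt _ (Finset.image_subset_iff.2 fun e _ => hf_mem e)
            fun x => hrep.classOnCycle (hK_feas x)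
      _ ≤ fcost P Kstar := fcost_image_le hP Kstar fun e _ => hf_cost e
  calc fcost P E' ≤ ε * fcost P Eopt := hE'_eps
    _ ≤ ε * fcost P Kstar := mul_le_mul_of_nonneg_left hopt (by linarith)

/-- Optimal cycle selection problem: find a minimum-cost subset
`Ê ⊆ E_min` so that every condensed node lies on a directed cycle of the
condensed digraph augmented with `Ê`.  If `E'` is an ε-optimal solution of
the cycle selection problem (`c(E') ≤ ε·c(E_opt)`, `ε ≥ 1`), then the
corresponding feedback matrix `K'` (with `K'_{ij} = ⋆` iff `(y_j,u_i) ∈ E'`)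
is an ε-optimal solution of the optimal feedback selection problem:
`P(K') ≤ ε·P(K*)`.  Here `E_min` contains, for each pair of SCCs joined by a
feasible feedback edge, a minimum-cost such edge, the cost matrix is
nonnegative, and (the bipartite graph `B(Ā)` having a perfect matching)
feasibility of a feedback matrix is the condition that every state lie in an
SCC of the closed-loop digraph containing a feedback edge. -/
theorem stmt_4 {X : Type*} {m p : ℕ}
    (EX : X → X → Prop) (fU : Fin m → X) (fY : Fin p → X)
    (P : Fin m → Fin p → ℝ) (hP : ∀ i j, 0 ≤ P i j)
    (Emin : Finset (Fin p × Fin m))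
    -- `Emin` keeps a minimum-cost feedback edge between each pair of SCCs
    (hEmin : ∀ j : Fin p, ∀ i : Fin m, ∃ e ∈ Emin,
      P e.2 e.1 ≤ P i j ∧ mreach EX (fY j) (fY e.1) ∧ mreach EX (fU i) (fU e.2))
    -- an optimal solution of the cycle selection problem
    (Eopt : Finset (Fin p × Fin m)) (hEopt_sub : Eopt ⊆ Emin)
    (hEopt_feas : ∀ x : X, classOnCycle EX fU fY Eopt x)
    (hEopt_opt : ∀ E₁ ⊆ Emin, (∀ x : X, classOnCycle EX fU fY E₁ x) →
      fcost P Eopt ≤ fcost P E₁)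
    -- an optimal solution of the feedback selection problem
    (Kstar : Finset (Fin p × Fin m))
    (hK_feas : ∀ x : X, coveredState EX fU fY Kstar x)
    (hK_opt : ∀ K : Finset (Fin p × Fin m),
      (∀ x : X, coveredState EX fU fY K x) → fcost P Kstar ≤ fcost P K)
    -- an ε-optimal solution of the cycle selection problem
    (ε : ℝ) (hε : 1 ≤ ε)
    (E' : Finset (Fin p × Fin m)) (hE'_sub : E' ⊆ Emin)
    (hE'_feas : ∀ x : X, classOnCycle EX fU fY E' x)
    (hE'_eps : fcost P E' ≤ ε * fcost P Eopt) :
    fcost P E' ≤ ε * fcost P Kstar :=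
  stmt_4_general EX fU fY P hP Emin hEmin Eopt hEopt_opt Kstar hK_feas ε hε E' hE'_eps
end

section
/- Let C_opt be an optimal cycle cover of the node set N with total edge cost c(E_opt), and let k̃₁ be the maximum multiplicity of any feedback edge across the cycles in C_opt (the number of cycles of C_opt containing that edge). Then the greedy algorithm that repeatedly selects a cycle minimizing (cost of its remaining feedback edges)/(number of its uncovered nodes) returns an edge set H covering all nodes with c(H) ≤ k̃₁ · (1 + log|N|) · c(E_opt). -/
/-- The nodes covered after the first `k` cycles chosen by the greedy
algorithm. -/
def covNodes {α β : Type*} [DecidableEq α]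
    (L : List (Finset α × Finset β)) (k : ℕ) : Finset α :=
  ((L.take k).map Prod.fst).foldr (· ∪ ·) ∅

/-- The feedback edges selected after the first `k` cycles chosen by the
greedy algorithm. -/
def selEdges {α β : Type*} [DecidableEq β]
    (L : List (Finset α × Finset β)) (k : ℕ) : Finset β :=
  ((L.take k).map Prod.snd).foldr (· ∪ ·) ∅

/-!
At step `k` let `u k` be the number of uncovered nodes. They are all covered by the cycles of
`Copt` that still contain an uncovered node, and the remaining costs of those cycles add up to
at most `k₁ · c(E_opt)`, since each edge of `E_opt` lies in at most `k₁` of them. Averaging,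
one of these cycles has ratio at most `k₁ · c(E_opt) / u k`, and so has the greedy choice; hence
step `k` costs at most `k₁ · c(E_opt) · (u k - u (k+1)) / u k`. Finally
`∑ (u k - u (k+1)) / u k ≤ 1 + log (u 0)`: every term but the last is bounded by
`log (u k) - log (u (k+1))`, and the last by `1`.
-/

open Finset

theorem sub_div_le_log_sub_log {a b : ℝ} (ha : 0 < a) (hb : 0 < b) :
    (a - b) / a ≤ Real.log a - Real.log b := by
  have h := Real.log_le_sub_one_of_pos (div_pos hb ha)
  rw [Real.log_div hb.ne' ha.ne', div_sub_one ha.ne'] at h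
  rw [← neg_sub b a, neg_div]
  linarith

theorem sum_range_sub_div_le_log_sub_log (u : ℕ → ℝ) (n : ℕ) (hpos : ∀ k ≤ n, 0 < u k) :
    ∑ k ∈ range n, (u k - u (k + 1)) / u k ≤ Real.log (u 0) - Real.log (u n) := by
  rw [← sum_range_sub' (fun k => Real.log (u k))]
  refine sum_le_sum fun k hk => ?_
  have hk := mem_range.1 hk
  exact sub_div_le_log_sub_log (hpos k hk.le) (hpos (k + 1) hk)

theorem sum_range_sub_div_le_one_add_log (u : ℕ → ℕ) (n : ℕ) (hpos : ∀ k < n, 0 < u k) :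
    ∑ k ∈ range n, ((u k : ℝ) - u (k + 1)) / u k ≤ 1 + Real.log (u 0) := by
  cases n with
  | zero => rw [sum_range_zero]; linarith [Real.log_natCast_nonneg (u 0)]
  | succ m =>
    have hinit := sum_range_sub_div_le_log_sub_log (fun k => (u k : ℝ)) m
      fun k hk => Nat.cast_pos.2 (hpos k (Nat.lt_succ_of_le hk))
    have hlast : ((u m : ℝ) - u (m + 1)) / u m ≤ 1 := by
      rw [div_le_one (Nat.cast_pos.2 (hpos m m.lt_succ_self))]
      linarith [(u (m + 1)).cast_nonneg (α := ℝ)]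
    rw [sum_range_succ]
    linarith [Real.log_natCast_nonneg (u m)]

theorem Finset.exists_div_le_of_sum_le {ι : Type*} {s : Finset ι} {w a : ι → ℝ} {K u : ℝ}
    (hK : 0 ≤ K) (hu : 0 < u) (ha : ∀ i ∈ s, 0 < a i) (hw : ∑ i ∈ s, w i ≤ K)
    (hua : u ≤ ∑ i ∈ s, a i) : ∃ i ∈ s, w i / a i ≤ K / u := by
  have hs : s.Nonempty := nonempty_of_sum_ne_zero (hu.trans_le hua).ne'
  obtain ⟨i, hi, hwi⟩ := exists_le_of_sum_le hs (hw.trans <| calc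
    K = K / u * u := (div_mul_cancel₀ K hu.ne').symm
    _ ≤ K / u * ∑ i ∈ s, a i := by gcongr
    _ = ∑ i ∈ s, K / u * a i := mul_sum _ _ _)
  exact ⟨i, hi, (div_le_iff₀ (ha i hi)).2 hwi⟩

theorem Finset.sum_sum_le_mul_sum_biUnion {ι β : Type*} [DecidableEq β] (s : Finset ι)
    (F : ι → Finset β) (c : β → ℝ) (hc : ∀ e, 0 ≤ c e) (k : ℕ)
    (hk : ∀ e ∈ s.biUnion F, #{i ∈ s | e ∈ F i} ≤ k) :
    ∑ i ∈ s, ∑ e ∈ F i, c e ≤ k * ∑ e ∈ s.biUnion F, c e := by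
  rw [sum_comm' (t' := s.biUnion F) (s' := fun e => {i ∈ s | e ∈ F i})
    (fun i e => by simp only [mem_filter, mem_biUnion]; grind), mul_sum]
  refine sum_le_sum fun e he => ?_
  rw [sum_const, nsmul_eq_mul]
  exact mul_le_mul_of_nonneg_right (by exact_mod_cast hk e he) (hc e)

theorem Finset.card_sdiff_union_add_card_sdiff {α : Type*} [DecidableEq α] {N D : Finset α}
    (I : Finset α) (hD : D ⊆ N) : #(N \ (I ∪ D)) + #(D \ I) = #(N \ I) := by
  have hinter : D \ I = (N \ I) ∩ D := by
    ext x
    simp only [mem_sdiff, mem_inter]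
    exact ⟨fun h => ⟨⟨hD h.1, h.2⟩, h.1⟩, fun h => ⟨h.2, h.1.2⟩⟩
  rw [← sup_eq_union, ← sdiff_sdiff_left, hinter, card_sdiff_add_card_inter]

lemma foldr_union_eq_union {γ : Type*} [DecidableEq γ] (A : List (Finset γ)) (b : Finset γ) :
    A.foldr (· ∪ ·) b = A.foldr (· ∪ ·) ∅ ∪ b := by
  induction A with
  | nil => simp
  | cons a t ih => simp [ih, union_assoc]

lemma covNodes_zero {α β : Type*} [DecidableEq α] (L : List (Finset α × Finset β)) :
    covNodes L 0 = ∅ := by simp [covNodes]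

lemma selEdges_zero {α β : Type*} [DecidableEq β] (L : List (Finset α × Finset β)) :
    selEdges L 0 = ∅ := by simp [selEdges]

lemma covNodes_succ {α β : Type*} [DecidableEq α] (L : List (Finset α × Finset β))
    (k : ℕ) (hk : k < L.length) :
    covNodes L (k + 1) = covNodes L k ∪ (L.get ⟨k, hk⟩).1 := by
  rw [covNodes, List.take_add_one, List.getElem?_eq_getElem hk, List.map_append, List.foldr_append,
    foldr_union_eq_union]
  simp [covNodes]

lemma selEdges_succ {α β : Type*} [DecidableEq β] (L : List (Finset α × Finset β))
    (k : ℕ) (hk : k < L.length) :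
    selEdges L (k + 1) = selEdges L k ∪ (L.get ⟨k, hk⟩).2 := by
  rw [selEdges, List.take_add_one, List.getElem?_eq_getElem hk, List.map_append, List.foldr_append,
    foldr_union_eq_union]
  simp [selEdges]

/-- `ρ(C)`, with `I` the covered nodes and `H` the selected edges. -/
noncomputable def greedyRatio {α β : Type*} [DecidableEq α] [DecidableEq β] (c : β → ℝ)
    (I : Finset α) (H : Finset β) (C : Finset α × Finset β) : ℝ :=
  (∑ e ∈ C.2 \ H, c e) / #(C.1 \ I)

section GreedyStep

variable {α β : Type*} [DecidableEq α] [DecidableEq β] {N : Finset α} {c : β → ℝ}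
  {Copt : Finset (Finset α × Finset β)} {k₁ : ℕ}

theorem greedyRatio_le_of_cover (hc : ∀ e, 0 ≤ c e) (hcov : N ⊆ Copt.biUnion Prod.fst)
    (hmult : ∀ e ∈ Copt.biUnion Prod.snd, #{C ∈ Copt | e ∈ C.2} ≤ k₁)
    {I : Finset α} (H : Finset β) {D : Finset α × Finset β}
    (hmin : ∀ C ∈ Copt, (C.1 \ I).Nonempty → greedyRatio c I H D ≤ greedyRatio c I H C)
    (hN : (N \ I).Nonempty) :
    greedyRatio c I H D ≤ k₁ * (∑ e ∈ Copt.biUnion Prod.snd, c e) / #(N \ I) := by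
  set S := {C ∈ Copt | (C.1 \ I).Nonempty}
  have hS_cov : N \ I ⊆ S.biUnion (fun C => C.1 \ I) := by
    intro x hx
    obtain ⟨hxN, hxI⟩ := mem_sdiff.1 hx
    obtain ⟨C, hC, hxC⟩ := mem_biUnion.1 (hcov hxN)
    have hxCI : x ∈ C.1 \ I := mem_sdiff.2 ⟨hxC, hxI⟩
    exact mem_biUnion.2 ⟨C, mem_filter.2 ⟨hC, x, hxCI⟩, hxCI⟩
  have hS_card : (#(N \ I) : ℝ) ≤ ∑ C ∈ S, (#(C.1 \ I) : ℝ) := by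
    exact_mod_cast (card_le_card hS_cov).trans card_biUnion_le
  have hS_cost : ∑ C ∈ S, ∑ e ∈ C.2 \ H, c e ≤ k₁ * ∑ e ∈ Copt.biUnion Prod.snd, c e :=
    calc ∑ C ∈ S, ∑ e ∈ C.2 \ H, c e
        ≤ ∑ C ∈ S, ∑ e ∈ C.2, c e :=
          sum_le_sum fun C _ => sum_le_sum_of_subset_of_nonneg sdiff_subset fun e _ _ => hc e
      _ ≤ ∑ C ∈ Copt, ∑ e ∈ C.2, c e :=
          sum_le_sum_of_subset_of_nonneg (filter_subset _ _) fun C _ _ => sum_nonneg fun e _ => hc e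
      _ ≤ _ := sum_sum_le_mul_sum_biUnion Copt Prod.snd c hc k₁ hmult
  obtain ⟨C, hCS, hC⟩ := exists_div_le_of_sum_le
    (mul_nonneg k₁.cast_nonneg (sum_nonneg fun e _ => hc e)) (Nat.cast_pos.2 hN.card_pos)
    (fun C hC => Nat.cast_pos.2 (mem_filter.1 hC).2.card_pos) hS_cost hS_card
  obtain ⟨hC_opt, hC_new⟩ := mem_filter.1 hCS
  exact (hmin C hC_opt hC_new).trans hC

theorem greedy_step_cost_le (hc : ∀ e, 0 ≤ c e) (hcov : N ⊆ Copt.biUnion Prod.fst)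
    (hmult : ∀ e ∈ Copt.biUnion Prod.snd, #{C ∈ Copt | e ∈ C.2} ≤ k₁)
    (I : Finset α) (H : Finset β) {D : Finset α × Finset β} (hDN : D.1 ⊆ N)
    (hD : (D.1 \ I).Nonempty)
    (hmin : ∀ C ∈ Copt, (C.1 \ I).Nonempty → greedyRatio c I H D ≤ greedyRatio c I H C) :
    ∑ e ∈ H ∪ D.2, c e - ∑ e ∈ H, c e ≤
      k₁ * (∑ e ∈ Copt.biUnion Prod.snd, c e) *
        (((#(N \ I) : ℝ) - #(N \ (I ∪ D.1))) / #(N \ I)) := by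
  have hN : (N \ I).Nonempty := hD.mono (sdiff_subset_sdiff hDN le_rfl)
  have hratio := greedyRatio_le_of_cover hc hcov hmult H hmin hN
  have hd : (0 : ℝ) < #(D.1 \ I) := Nat.cast_pos.2 hD.card_pos
  have hcard : (#(N \ I) : ℝ) - #(N \ (I ∪ D.1)) = #(D.1 \ I) := by
    rw [← card_sdiff_union_add_card_sdiff I hDN]; push_cast; ring
  rw [← sum_sdiff (subset_union_left (s₂ := D.2)), add_sub_cancel_right, union_sdiff_left,
    hcard, mul_div_assoc', ← div_mul_eq_mul_div]
  exact (div_le_iff₀ hd).1 hratio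

end GreedyStep

theorem stmt_5_general {α β : Type*} [DecidableEq α] [DecidableEq β]
    (N : Finset α) (cycles : Finset (Finset α × Finset β)) (c : β → ℝ)
    (hc : ∀ e, 0 ≤ c e)
    (hsub : ∀ C ∈ cycles, C.1 ⊆ N)
    -- the greedy run
    (L : List (Finset α × Finset β))
    (hmem : ∀ C ∈ L, C ∈ cycles)
    (hnew : ∀ k : ℕ, (hk : k < L.length) →
      ((L.get ⟨k, hk⟩).1 \ covNodes L k).Nonempty)
    (hgreedy : ∀ k : ℕ, (hk : k < L.length) → ∀ C ∈ cycles,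
      (C.1 \ covNodes L k).Nonempty →
        (∑ e ∈ (L.get ⟨k, hk⟩).2 \ selEdges L k, c e) /
            (((L.get ⟨k, hk⟩).1 \ covNodes L k).card : ℝ)
          ≤ (∑ e ∈ C.2 \ selEdges L k, c e) /
              ((C.1 \ covNodes L k).card : ℝ))
    -- the optimal cycle cover
    (Copt : Finset (Finset α × Finset β))
    (hCopt_sub : Copt ⊆ cycles)
    (hCopt_cov : N ⊆ Copt.biUnion Prod.fst)
    -- the highest multiplicity of an edge in the optimal cover
    (k₁ : ℕ)
    (hk₁ : k₁ = (Copt.biUnion Prod.snd).sup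
      (fun e => (Copt.filter (fun C => e ∈ C.2)).card)) :
    ∑ e ∈ selEdges L L.length, c e
      ≤ (k₁ : ℝ) * (1 + Real.log N.card) * ∑ e ∈ Copt.biUnion Prod.snd, c e := by
  set K := (k₁ : ℝ) * ∑ e ∈ Copt.biUnion Prod.snd, c e
  set u : ℕ → ℕ := fun k => #(N \ covNodes L k)
  have hmult : ∀ e ∈ Copt.biUnion Prod.snd, #{C ∈ Copt | e ∈ C.2} ≤ k₁ := fun e he =>
    hk₁ ▸ le_sup (f := fun e => #{C ∈ Copt | e ∈ C.2}) he
  have hstep : ∀ k (hk : k < L.length), 0 < u k ∧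
      ∑ e ∈ selEdges L (k + 1), c e - ∑ e ∈ selEdges L k, c e
        ≤ K * (((u k : ℝ) - u (k + 1)) / u k) := by
    intro k hk
    have hDN := hsub _ (hmem _ (L.get_mem ⟨k, hk⟩))
    refine ⟨card_pos.2 ((hnew k hk).mono (sdiff_subset_sdiff hDN le_rfl)), ?_⟩
    simp only [u, covNodes_succ L k hk, selEdges_succ L k hk]
    exact greedy_step_cost_le hc hCopt_cov hmult _ _ hDN (hnew k hk)
      fun C hC => hgreedy k hk C (hCopt_sub hC)
  calc ∑ e ∈ selEdges L L.length, c e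
      = ∑ k ∈ range L.length, (∑ e ∈ selEdges L (k + 1), c e - ∑ e ∈ selEdges L k, c e) := by
        rw [sum_range_sub (fun k => ∑ e ∈ selEdges L k, c e), selEdges_zero, sum_empty, sub_zero]
    _ ≤ ∑ k ∈ range L.length, K * (((u k : ℝ) - u (k + 1)) / u k) :=
        sum_le_sum fun k hk => (hstep k (mem_range.1 hk)).2
    _ ≤ K * (1 + Real.log (u 0)) := by
        rw [← mul_sum]
        exact mul_le_mul_of_nonneg_left
          (sum_range_sub_div_le_one_add_log u _ fun k hk => (hstep k hk).1)
          (mul_nonneg k₁.cast_nonneg (sum_nonneg fun e _ => hc e))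
    _ = (k₁ : ℝ) * (1 + Real.log N.card) * ∑ e ∈ Copt.biUnion Prod.snd, c e := by
        simp only [u, covNodes_zero, sdiff_empty]; ring

/-- Let `Copt` be an optimal cycle cover of the node set `N` and
let `k̃₁` be the maximum multiplicity of any feedback edge across the cycles
of `Copt`.  Then the greedy algorithm that repeatedly selects a cycle
minimizing (cost of its remaining feedback edges)/(number of its uncovered
nodes) returns an edge set `H` covering all nodes with
`c(H) ≤ k̃₁ · (1 + log |N|) · c(E_opt)`.  A cycle is a pair
`(node set, feedback edge set)`; the greedy run is recorded as a list `L`. -/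
theorem stmt_5 {α β : Type*} [DecidableEq α] [DecidableEq β]
    (N : Finset α) (cycles : Finset (Finset α × Finset β)) (c : β → ℝ)
    (hc : ∀ e, 0 ≤ c e)
    (hsub : ∀ C ∈ cycles, C.1 ⊆ N)
    -- the greedy run
    (L : List (Finset α × Finset β))
    (hmem : ∀ C ∈ L, C ∈ cycles)
    (hnew : ∀ k : ℕ, (hk : k < L.length) →
      ((L.get ⟨k, hk⟩).1 \ covNodes L k).Nonempty)
    (hgreedy : ∀ k : ℕ, (hk : k < L.length) → ∀ C ∈ cycles,
      (C.1 \ covNodes L k).Nonempty →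
        (∑ e ∈ (L.get ⟨k, hk⟩).2 \ selEdges L k, c e) /
            (((L.get ⟨k, hk⟩).1 \ covNodes L k).card : ℝ)
          ≤ (∑ e ∈ C.2 \ selEdges L k, c e) /
              ((C.1 \ covNodes L k).card : ℝ))
    (hdone : N ⊆ covNodes L L.length)
    -- the optimal cycle cover
    (Copt : Finset (Finset α × Finset β))
    (hCopt_sub : Copt ⊆ cycles)
    (hCopt_cov : N ⊆ Copt.biUnion Prod.fst)
    (hCopt_opt : ∀ C' ⊆ cycles, N ⊆ C'.biUnion Prod.fst →
      ∑ e ∈ Copt.biUnion Prod.snd, c e ≤ ∑ e ∈ C'.biUnion Prod.snd, c e)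
    -- the highest multiplicity of an edge in the optimal cover
    (k₁ : ℕ)
    (hk₁ : k₁ = (Copt.biUnion Prod.snd).sup
      (fun e => (Copt.filter (fun C => e ∈ C.2)).card)) :
    ∑ e ∈ selEdges L L.length, c e
      ≤ (k₁ : ℝ) * (1 + Real.log N.card) * ∑ e ∈ Copt.biUnion Prod.snd, c e :=
  stmt_5_general N cycles c hc hsub L hmem hnew hgreedy Copt hCopt_sub hCopt_cov k₁ hk₁
end

section
/- In an arborescence, a directed edge (y_b, u_a) from a descendant of node N to an ancestor of N covers exactly the nodes on the unique directed path from the SCC attached to u_a to the SCC attached to y_b; hence the set of nodes of Tree(N) not covered by (y_b,u_a) forms a disjoint union of subtrees of Tree(N). -/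
section
variable {V β : Type*}

/-- The edge relation of an arborescence with root `r` and parent map `par`:
there is an edge from each node to each of its (non-root) children. -/
def treeEdge (par : V → V) (r : V) (a b : V) : Prop := b ≠ r ∧ par b = a

/-- A feedback edge `e`, whose input attaches to the SCC-node `ain e` and
whose output attaches to the SCC-node `aout e`, covers the node `N` of the
arborescence iff `ain e` is an ancestor of `N` and `aout e` is a descendant
of `N` (so that adding the edge puts `N` on a directed cycle). -/
def covers (par : V → V) (r : V) (ain aout : β → V) (e : β) (N : V) : Prop :=
  Relation.ReflTransGen (treeEdge par r) (ain e) N ∧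
    Relation.ReflTransGen (treeEdge par r) N (aout e)

end

/-! Every tree edge strictly increases the distance to the root, so the tree relation is
well-founded and a cycle of the augmented digraph must use the new edge `D → A`; it then runs
along the tree path from `A` to `D`. Since `A` is an ancestor of `N`, the uncovered part of
`Tree(N)` is closed under taking descendants, and such a set is the union of the subtrees
hanging from its minimal elements. These subtrees are disjoint because the ancestors of a node
form a chain. -/

section Digraph
open Relation

variable {α : Type*} {E : α → α → Prop}

lemma not_reflTransGen_of_wellFounded (hwf : WellFounded E) {u v : α} (h : E v u) :
    ¬ ReflTransGen E u v := fun huv =>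
  hwf.transGen.irrefl.irrefl v (TransGen.head' h huv)

lemma reflTransGen_sup_edge {A D x y : α}
    (h : ReflTransGen (fun a b => E a b ∨ (a = D ∧ b = A)) x y) :
    ReflTransGen E x y ∨ (ReflTransGen E x D ∧ ReflTransGen E A y) := by
  induction h with
  | refl => exact .inl .refl
  | tail _ hedge ih =>
    rcases hedge with hE | ⟨rfl, rfl⟩
    · exact ih.imp (·.tail hE) (And.imp_right (·.tail hE))
    · exact .inr ⟨ih.elim id And.left, .refl⟩

theorem exists_cycle_sup_edge_iff (hwf : WellFounded E) (A D v : α) :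
    (∃ u, (E v u ∨ (v = D ∧ u = A)) ∧
        ReflTransGen (fun a b => E a b ∨ (a = D ∧ b = A)) u v) ↔
      ReflTransGen E A v ∧ ReflTransGen E v D := by
  have lift : ∀ {x y}, ReflTransGen E x y →
      ReflTransGen (fun a b => E a b ∨ (a = D ∧ b = A)) x y :=
    fun h => ReflTransGen.mono (fun _ _ => Or.inl) _ _ h
  constructor
  · rintro ⟨u, hvu | ⟨rfl, rfl⟩, huv⟩
    · rcases reflTransGen_sup_edge huv with huv | ⟨huD, hAv⟩
      · exact absurd huv (not_reflTransGen_of_wellFounded hwf hvu)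
      · exact ⟨hAv, .head hvu huD⟩
    · exact ⟨(reflTransGen_sup_edge huv).elim id And.left, .refl⟩
  · rintro ⟨hAv, hvD⟩
    rcases hvD.cases_head with rfl | ⟨c, hvc, hcD⟩
    · exact ⟨A, .inr ⟨rfl, rfl⟩, lift hAv⟩
    · exact ⟨c, .inl hvc, ((lift hcD).tail (.inr ⟨rfl, rfl⟩)).trans (lift hAv)⟩

lemma reflTransGen_total_of_leftUnique (hE : Relator.LeftUnique E) {a b v : α}
    (ha : ReflTransGen E a v) (hb : ReflTransGen E b v) :
    ReflTransGen E a b ∨ ReflTransGen E b a := by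
  have hswap : Relator.RightUnique (Function.swap E) := fun _ _ _ h h' => hE h h'
  rw [← reflTransGen_swap] at ha hb
  simpa only [reflTransGen_swap, or_comm] using
    ReflTransGen.total_of_right_unique hswap ha hb

def IsDescendantClosed (E : α → α → Prop) (S : Set α) : Prop :=
  ∀ ⦃v w⦄, v ∈ S → ReflTransGen E v w → w ∈ S

def forestRoots (E : α → α → Prop) (S : Set α) : Set α :=
  {M | M ∈ S ∧ ∀ a, E a M → a ∉ S}

variable {S : Set α}

theorem mem_iff_exists_forestRoots (hS : IsDescendantClosed E S) (hwf : WellFounded E)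
    {v : α} :
    v ∈ S ↔ ∃ M ∈ forestRoots E S, ReflTransGen E M v := by
  constructor
  · intro hv
    obtain ⟨M, ⟨hMS, hMv⟩, hmin⟩ :=
      hwf.has_min {x | x ∈ S ∧ ReflTransGen E x v} ⟨v, hv, .refl⟩
    exact ⟨M, ⟨hMS, fun a haM haS => hmin a ⟨haS, .head haM hMv⟩ haM⟩, hMv⟩
  · rintro ⟨M, hM, hMv⟩
    exact hS hM.1 hMv

lemma not_reflTransGen_of_mem_forestRoots (hS : IsDescendantClosed E S) {M M' : α}
    (hM : M ∈ forestRoots E S) (hM' : M' ∈ forestRoots E S) (hne : M ≠ M') :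
    ¬ ReflTransGen E M M' := by
  intro hMM'
  rcases hMM'.cases_tail with rfl | ⟨p, hMp, hpM'⟩
  · exact hne rfl
  · exact hM'.2 p hpM' (hS hM.1 hMp)

theorem forestRoots_disjoint (hS : IsDescendantClosed E S) (hE : Relator.LeftUnique E)
    {M M' : α} (hM : M ∈ forestRoots E S) (hM' : M' ∈ forestRoots E S) (hne : M ≠ M')
    {v : α} (hMv : ReflTransGen E M v) : ¬ ReflTransGen E M' v := fun hM'v =>
  (reflTransGen_total_of_leftUnique hE hMv hM'v).elim
    (not_reflTransGen_of_mem_forestRoots hS hM hM' hne)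
    (not_reflTransGen_of_mem_forestRoots hS hM' hM hne.symm)

end Digraph

section Arborescence

variable {V : Type*} {par : V → V} {r : V}

lemma leftUnique_treeEdge : Relator.LeftUnique (treeEdge par r) :=
  fun _ _ _ h h' => h.2.symm.trans h'.2

theorem wellFounded_treeEdge (hreach : ∀ v : V, ∃ n : ℕ, par^[n] v = r) :
    WellFounded (treeEdge par r) := by
  classical
  refine Subrelation.wf (r := InvImage (· < ·) fun v => Nat.find (hreach v)) ?_
    (InvImage.wf _ wellFounded_lt)
  rintro a b ⟨hb, rfl⟩
  have hpos : Nat.find (hreach b) ≠ 0 := fun h0 =>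
    hb (by simpa [h0] using Nat.find_spec (hreach b))
  show Nat.find (hreach (par b)) < Nat.find (hreach b)
  refine (Nat.find_min' _ (m := Nat.find (hreach b) - 1) ?_).trans_lt (by omega)
  rw [← Function.iterate_succ_apply, Nat.succ_eq_add_one, Nat.sub_add_cancel (by omega)]
  exact Nat.find_spec (hreach b)

end Arborescence

theorem stmt_15_general {V : Type*} (par : V → V) (r : V)
    (hreach : ∀ v : V, ∃ n : ℕ, par^[n] v = r)
    (N A D : V)
    (hA : Relation.ReflTransGen (treeEdge par r) A N) :
    -- the augmented digraph: tree edges together with the edge (D, A)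
    letI R : V → V → Prop := fun a b => treeEdge par r a b ∨ (a = D ∧ b = A)
    -- a node is covered iff it lies on a directed cycle of the augmented
    -- digraph, iff it lies on the unique directed path from A to D
    (∀ v : V, (∃ u, R v u ∧ Relation.ReflTransGen R u v) ↔
      (Relation.ReflTransGen (treeEdge par r) A v ∧
        Relation.ReflTransGen (treeEdge par r) v D)) ∧
    -- the uncovered nodes of Tree(N) form a disjoint union of subtrees
    (∃ roots : Set V,
      (∀ M ∈ roots, Relation.ReflTransGen (treeEdge par r) N M) ∧
      (∀ v : V, (Relation.ReflTransGen (treeEdge par r) N v ∧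
          ¬ (Relation.ReflTransGen (treeEdge par r) A v ∧
            Relation.ReflTransGen (treeEdge par r) v D)) ↔
        ∃ M ∈ roots, Relation.ReflTransGen (treeEdge par r) M v) ∧
      (∀ M ∈ roots, ∀ M' ∈ roots, M ≠ M' → ∀ v : V,
        Relation.ReflTransGen (treeEdge par r) M v →
          ¬ Relation.ReflTransGen (treeEdge par r) M' v)) := by
  have hwf := wellFounded_treeEdge hreach
  have hS : IsDescendantClosed (treeEdge par r) {v | Relation.ReflTransGen (treeEdge par r) N v ∧
      ¬ (Relation.ReflTransGen (treeEdge par r) A v ∧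
        Relation.ReflTransGen (treeEdge par r) v D)} :=
    fun v w ⟨hNv, hv⟩ hvw =>
      ⟨hNv.trans hvw, fun ⟨_, hwD⟩ => hv ⟨hA.trans hNv, hvw.trans hwD⟩⟩
  exact ⟨exists_cycle_sup_edge_iff hwf A D, forestRoots (treeEdge par r) _, fun M hM => hM.1.1,
    fun v => mem_iff_exists_forestRoots hS hwf,
    fun M hM M' hM' hne v => forestRoots_disjoint hS leftUnique_treeEdge hM hM' hne⟩

/-- In an arborescence, adding a directed edge from `D` (a
descendant of the node `N`, where the output `y_b` attaches) to `A` (an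
ancestor of `N`, where the input `u_a` attaches) creates directed cycles
exactly through the nodes of the unique directed path from `A` to `D`; hence
such an edge covers exactly the nodes on that path, and the set of nodes of
`Tree(N)` not covered by the edge forms a disjoint union of subtrees of
`Tree(N)`. -/
theorem stmt_15 {V : Type*} (par : V → V) (r : V)
    (hroot : par r = r) (hreach : ∀ v : V, ∃ n : ℕ, par^[n] v = r)
    (N A D : V)
    (hA : Relation.ReflTransGen (treeEdge par r) A N)
    (hD : Relation.ReflTransGen (treeEdge par r) N D) :
    -- the augmented digraph: tree edges together with the edge (D, A)
    letI R : V → V → Prop := fun a b => treeEdge par r a b ∨ (a = D ∧ b = A)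
    -- a node is covered iff it lies on a directed cycle of the augmented
    -- digraph, iff it lies on the unique directed path from A to D
    (∀ v : V, (∃ u, R v u ∧ Relation.ReflTransGen R u v) ↔
      (Relation.ReflTransGen (treeEdge par r) A v ∧
        Relation.ReflTransGen (treeEdge par r) v D)) ∧
    -- the uncovered nodes of Tree(N) form a disjoint union of subtrees
    (∃ roots : Set V,
      (∀ M ∈ roots, Relation.ReflTransGen (treeEdge par r) N M) ∧
      (∀ v : V, (Relation.ReflTransGen (treeEdge par r) N v ∧
          ¬ (Relation.ReflTransGen (treeEdge par r) A v ∧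
            Relation.ReflTransGen (treeEdge par r) v D)) ↔
        ∃ M ∈ roots, Relation.ReflTransGen (treeEdge par r) M v) ∧
      (∀ M ∈ roots, ∀ M' ∈ roots, M ≠ M' → ∀ v : V,
        Relation.ReflTransGen (treeEdge par r) M v →
          ¬ Relation.ReflTransGen (treeEdge par r) M' v)) :=
  stmt_15_general par r hreach N A D hA
end
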